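/- If α is designated under every valuation in the n-th level-valuation set Λₙ(M) for the Nmatrix M of a normal modal logic L, and the characteristic function v_Δ of every maximally consistent set Δ belongs to Λₙ(M), then α is a theorem of L, and consequently □α is a theorem of L and v_Δ(α) ∈ N ∩ D (α is both designated and necessary) for every maximally consistent Δ. -/
import Mathlib


/-- Modal formulas: atoms, ⊥, implication, box. -/
inductive Fml : Type
  | atom : ℕ → Fml
  | bot  : Fml
  | imp  : Fml → Fml → Fml
  | box  : Fml → Fml
deriving DecidableEq

namespace Fml
/-- ¬α := α → ⊥ -/
def neg (a : Fml) : Fml := imp a bot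
/-- ◇α := ¬□¬α -/
def dia (a : Fml) : Fml := neg (box (neg a))
/-- classical conjunction: α ∧ β := ¬(α → ¬β) -/
def and (a b : Fml) : Fml := neg (imp a (neg b))
end Fml

/-- Hilbert system for a normal modal logic: classical propositional axioms,
the K axiom, extra axiom schemas `Ax`, modus ponens and necessitation. -/
inductive Thm (Ax : Fml → Prop) : Fml → Prop
  | ax1 (a b : Fml) : Thm Ax (a.imp (b.imp a))
  | ax2 (a b c : Fml) : Thm Ax ((a.imp (b.imp c)).imp ((a.imp b).imp (a.imp c)))
  | ax3 (a : Fml) : Thm Ax ((a.neg.neg).imp a)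
  | axK (a b : Fml) : Thm Ax (((a.imp b).box).imp ((a.box).imp (b.box)))
  | extra (a : Fml) : Ax a → Thm Ax a
  | mp {a b : Fml} : Thm Ax (a.imp b) → Thm Ax a → Thm Ax b
  | nec {a : Fml} : Thm Ax a → Thm Ax a.box

/-- Derivability from a set of hypotheses: theorems of the logic,
members of Δ, and modus ponens. -/
inductive Deriv (Ax : Fml → Prop) (Δ : Set Fml) : Fml → Prop
  | thm {a : Fml} : Thm Ax a → Deriv Ax Δ a
  | mem {a : Fml} : a ∈ Δ → Deriv Ax Δ a
  | mp {a b : Fml} : Deriv Ax Δ (a.imp b) → Deriv Ax Δ a → Deriv Ax Δ b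

/-- Δ is consistent: no formula is derivable together with its negation. -/
def Consistent (Ax : Fml → Prop) (Δ : Set Fml) : Prop :=
  ¬ ∃ γ, Deriv Ax Δ γ ∧ Deriv Ax Δ γ.neg

/-- Δ is maximally consistent. -/
def MaxConsistent (Ax : Fml → Prop) (Δ : Set Fml) : Prop :=
  Consistent Ax Δ ∧ ∀ β, β ∉ Δ → ¬ Consistent Ax (insert β Δ)

/-- The eight truth values. -/
inductive V8 : Type
  | F | f | ff | fff | ttt | tt | t | T
deriving DecidableEq

/-- Modal characterization formula of each truth value. -/
def chr : V8 → Fml → Fml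
  | .F,   a => (a.neg.dia).and (a.neg.and a.neg.box)
  | .f,   a => (a.neg.dia).and (a.neg.and a.dia)
  | .ff,  a => (a.box).and (a.neg.and a.neg.box)
  | .fff, a => (a.box).and (a.neg.and a.dia)
  | .ttt, a => (a.neg.dia).and (a.and a.neg.box)
  | .tt,  a => (a.box).and (a.and a.neg.box)
  | .t,   a => (a.neg.dia).and (a.and a.dia)
  | .T,   a => (a.box).and (a.and a.dia)

/-- Designated values: characterization contains the conjunct β. -/
def DesigV8 : Set V8 := {.T, .t, .tt, .ttt}

section Aux

variable {Ax : Fml → Prop}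

/-- derivability is monotone in the hypothesis set -/
lemma deriv_mono {Δ Δ' : Set Fml} (h : Δ ⊆ Δ') {a : Fml} (hd : Deriv Ax Δ a) :
    Deriv Ax Δ' a := by
  induction hd with
  | thm h' => exact .thm h'
  | mem h' => exact .mem (h h')
  | mp _ _ ih1 ih2 => exact .mp ih1 ih2

lemma thm_id (a : Fml) : Thm Ax (a.imp a) :=
  .mp (.mp (.ax2 a (a.imp a) a) (.ax1 a (a.imp a))) (.ax1 a a)

/-- Deduction theorem. -/
lemma deduction {Δ : Set Fml} {a b : Fml} (h : Deriv Ax (insert a Δ) b) :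
    Deriv Ax Δ (a.imp b) := by
  induction h with
  | @thm c h' => exact .mp (.thm (.ax1 c a)) (.thm h')
  | @mem c h' =>
    rcases h' with h' | h'
    · subst h'; exact .thm (thm_id _)
    · exact .mp (.thm (.ax1 c a)) (.mem h')
  | @mp c d _ _ ih1 ih2 => exact .mp (.mp (.thm (.ax2 a c d)) ih1) ih2

lemma thm_of_deriv_empty {b : Fml} (h : Deriv Ax (∅ : Set Fml) b) : Thm Ax b := by
  induction h with
  | thm h' => exact h'
  | mem h' => exact absurd h' (Set.notMem_empty _)
  | mp _ _ ih1 ih2 => exact .mp ih1 ih2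

/-- ex falso -/
lemma thm_efq (c : Fml) : Thm Ax (Fml.bot.imp c) := by
  apply thm_of_deriv_empty
  apply deduction
  exact .mp (.thm (.ax3 c)) (deduction (.mem (Or.inr (Or.inl rfl))))

/-- double negation introduction -/
lemma thm_dni (a : Fml) : Thm Ax (a.imp a.neg.neg) := by
  apply thm_of_deriv_empty
  apply deduction
  apply deduction
  exact .mp (.mem (Or.inl rfl)) (.mem (Or.inr (Or.inl rfl)))

/-- left conjunct -/
lemma thm_and_left (a b : Fml) : Thm Ax ((a.and b).imp a) := by
  apply thm_of_deriv_empty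
  apply deduction
  apply Deriv.mp (.thm (.ax3 a))
  apply deduction
  -- context: {a.neg, a.and b}; derive ⊥
  refine .mp (.mem (Or.inr (Or.inl rfl))) ?_
  -- derive a.imp b.neg
  apply deduction; apply deduction
  exact .mp (.mem (Or.inr (Or.inr (Or.inl rfl)))) (.mem (Or.inr (Or.inl rfl)))

/-- right conjunct -/
lemma thm_and_right (a b : Fml) : Thm Ax ((a.and b).imp b) := by
  apply thm_of_deriv_empty
  apply deduction
  apply Deriv.mp (.thm (.ax3 b))
  apply deduction
  -- context: {b.neg, a.and b}; derive ⊥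
  refine .mp (.mem (Or.inr (Or.inl rfl))) ?_
  -- derive a.imp b.neg
  apply deduction
  exact .mem (Or.inr (Or.inl rfl))

lemma thm_box_mono {a b : Fml} (h : Thm Ax (a.imp b)) : Thm Ax (a.box.imp b.box) :=
  .mp (.axK a b) (.nec h)

/-- Lindenbaum lemma -/
lemma lindenbaum {Δ₀ : Set Fml} (h : Consistent Ax Δ₀) :
    ∃ Δ, Δ₀ ⊆ Δ ∧ MaxConsistent Ax Δ := by
  obtain ⟨M, hM⟩ := zorn_subset_nonempty {Δ | Consistent Ax Δ}
    (fun c hc hchain hne => by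
      refine ⟨⋃₀ c, ?_, fun s hs => Set.subset_sUnion_of_mem hs⟩
      rintro ⟨γ, h1, h2⟩
      have key : ∀ {γ : Fml}, Deriv Ax (⋃₀ c) γ → ∃ Δ ∈ c, Deriv Ax Δ γ := by
        intro γ hd
        induction hd with
        | thm h' => exact ⟨hne.choose, hne.choose_spec, .thm h'⟩
        | mem h' =>
          obtain ⟨Δ, hΔ, hγ⟩ := h'
          exact ⟨Δ, hΔ, .mem hγ⟩
        | mp _ _ ih1 ih2 =>
          obtain ⟨Δ1, hΔ1, hd1⟩ := ih1
          obtain ⟨Δ2, hΔ2, hd2⟩ := ih2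
          rcases hchain.total hΔ1 hΔ2 with hle | hle
          · exact ⟨Δ2, hΔ2, .mp (deriv_mono hle hd1) hd2⟩
          · exact ⟨Δ1, hΔ1, .mp hd1 (deriv_mono hle hd2)⟩
      obtain ⟨Δ1, hΔ1, hd1⟩ := key h1
      obtain ⟨Δ2, hΔ2, hd2⟩ := key h2
      rcases hchain.total hΔ1 hΔ2 with hle | hle
      · exact hc hΔ2 ⟨γ, deriv_mono hle hd1, hd2⟩
      · exact hc hΔ1 ⟨γ, hd1, deriv_mono hle hd2⟩) Δ₀ h
  refine ⟨M, hM.1, hM.2.1, fun β hβ hcon => ?_⟩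
  have : insert β M ⊆ M := hM.2.2 hcon (Set.subset_insert β M)
  exact hβ (this (Set.mem_insert β M))

/-- Any designated characterization entails the formula itself. -/
lemma deriv_of_desig {Δ : Set Fml} {v : V8} {a : Fml} (hv : v ∈ DesigV8)
    (h : Deriv Ax Δ (chr v a)) : Deriv Ax Δ a := by
  have extract : ∀ c1 c2 : Fml, Deriv Ax Δ (c1.and (a.and c2)) → Deriv Ax Δ a := by
    intro c1 c2 h'
    exact .mp (.thm (thm_and_left a c2)) (.mp (.thm (thm_and_right c1 (a.and c2))) h')
  rcases hv with rfl | rfl | rfl | rfl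
  · exact extract _ _ h
  · exact extract _ _ h
  · exact extract _ _ h
  · exact extract _ _ h

end Aux

/-- if α is designated under every valuation in the n-th level set
S, and the characteristic function of every maximally consistent set lies in S,
then α and □α are theorems of L, and the characteristic value of α is in
N ∩ D = {T, tt} for every maximally consistent set. -/
theorem stmt11 (Ax : Fml → Prop) (S : Set (Fml → V8))
    (charFn : Set Fml → Fml → V8)
    (hchar : ∀ Δ : Set Fml, MaxConsistent Ax Δ →
      ∀ β, Deriv Ax Δ (chr (charFn Δ β) β))
    (hmem : ∀ Δ : Set Fml, MaxConsistent Ax Δ → charFn Δ ∈ S)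
    (α : Fml) (hval : ∀ v ∈ S, v α ∈ DesigV8) :
    Thm Ax α ∧ Thm Ax α.box ∧
      ∀ Δ : Set Fml, MaxConsistent Ax Δ →
        charFn Δ α ∈ ({.T, .tt} : Set V8) := by
  have hα : Thm Ax α := by
    by_contra hnt
    have hcons : Consistent Ax ({α.neg} : Set Fml) := by
      rintro ⟨γ, h1, h2⟩
      have hbot : Deriv Ax ({α.neg} : Set Fml) Fml.bot := .mp h2 h1
      have : Deriv Ax (insert α.neg (∅ : Set Fml)) Fml.bot := by
        simpa using hbot
      exact hnt (.mp (.ax3 α) (thm_of_deriv_empty (deduction this)))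
    obtain ⟨Δ, hsub, hmax⟩ := lindenbaum hcons
    have hdesig : charFn Δ α ∈ DesigV8 := hval _ (hmem Δ hmax)
    have hda : Deriv Ax Δ α := deriv_of_desig hdesig (hchar Δ hmax α)
    exact hmax.1 ⟨α, hda, .mem (hsub rfl)⟩
  refine ⟨hα, .nec hα, fun Δ hΔ => ?_⟩
  have hdesig : charFn Δ α ∈ DesigV8 := hval _ (hmem Δ hΔ)
  have hch := hchar Δ hΔ α
  -- □¬¬α is derivable
  have hbox : Deriv Ax Δ (α.neg.neg.box) :=
    .thm (.mp (thm_box_mono (thm_dni α)) (.nec hα))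
  -- from chr t / chr ttt we get ◇¬α = ¬□¬¬α, contradiction
  have noDia : ¬ Deriv Ax Δ (α.neg.dia) := fun hd =>
    hΔ.1 ⟨α.neg.neg.box, hbox, hd⟩
  rcases hdesig with h | h | h | h
  · exact Or.inl h
  · rw [h] at hch; exact absurd (Deriv.mp (.thm (thm_and_left _ _)) hch) noDia
  · exact Or.inr h
  · rw [h] at hch; exact absurd (Deriv.mp (.thm (thm_and_left _ _)) hch) noDia
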